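/- arXiv:2112.05837 — 2 statements merged into one kernel-verified Lean document; each statement's English description precedes it below -/
import Mathlib

section
/- Let X be a square-integrable ℝ^d-valued random vector and λ ≥ 0. Define G_λ(θ) = E[max{‖X−θ‖², λ}]. Then the vector g_λ(θ) = −2·E[(X − θ)·1(‖X−θ‖² > λ)] is a subgradient of G_λ at θ, i.e., G_λ(θ') ≥ G_λ(θ) + ⟨g_λ(θ), θ' − θ⟩ for all θ' ∈ ℝ^d. -/
open MeasureTheory ProbabilityTheory

/-!
Pointwise, `θ ↦ max {‖x - θ‖², λ}` has subgradient `-2 (x - θ) 1(‖x - θ‖² > λ)` at `θ`: where the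
square is active this is the gradient of a convex function, elsewhere the max sits at its lower
bound `λ`. Integrating the pointwise subgradient inequality, with the inner product pulled out of
the Bochner integral, gives the subgradient inequality for the expectation.
-/

section Subgradient

variable {E : Type*} [NormedAddCommGroup E] [InnerProductSpace ℝ E]

theorem max_sq_norm_sub_add_inner_le (x θ θ' : E) (lam : ℝ) :
    max (‖x - θ‖ ^ 2) lam +
        inner ℝ ((-2 : ℝ) • (if lam < ‖x - θ‖ ^ 2 then x - θ else 0)) (θ' - θ)
      ≤ max (‖x - θ'‖ ^ 2) lam := by
  split_ifs with h
  · have hexpand : ‖x - θ'‖ ^ 2 = ‖x - θ‖ ^ 2 - 2 * inner ℝ (x - θ) (θ' - θ) + ‖θ' - θ‖ ^ 2 := by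
      rw [← norm_sub_sq_real, sub_sub_sub_cancel_right]
    rw [max_eq_left h.le, real_inner_smul_left]
    nlinarith [le_max_left (‖x - θ'‖ ^ 2) lam, sq_nonneg ‖θ' - θ‖]
  · rw [max_eq_right (not_lt.mp h), smul_zero, inner_zero_left, add_zero]
    exact le_max_right _ _

variable {Ω : Type*} [MeasurableSpace Ω] {μ : Measure Ω}

theorem integral_add_inner_integral_le [CompleteSpace E] {f f' : Ω → ℝ} {g : Ω → E}
    (hf : Integrable f μ) (hf' : Integrable f' μ) (hg : Integrable g μ) (v : E)
    (h : ∀ᵐ ω ∂μ, f ω + inner ℝ (g ω) v ≤ f' ω) :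
    ∫ ω, f ω ∂μ + inner ℝ (∫ ω, g ω ∂μ) v ≤ ∫ ω, f' ω ∂μ := by
  have hinner : Integrable (fun ω => inner ℝ (g ω) v) μ := hg.inner_const v
  calc ∫ ω, f ω ∂μ + inner ℝ (∫ ω, g ω ∂μ) v
      = ∫ ω, (f ω + inner ℝ (g ω) v) ∂μ := by
        rw [integral_add hf hinner, real_inner_comm, ← integral_inner hg v]
        simp only [real_inner_comm]
    _ ≤ ∫ ω, f' ω ∂μ := integral_mono_ae (hf.add hinner) hf' h

end Subgradient

namespace MeasureTheory

variable {Ω E : Type*} [MeasurableSpace Ω] {μ : Measure Ω} [NormedAddCommGroup E]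

theorem MemLp.integrable_max_sq_norm_sub [IsFiniteMeasure μ] {X : Ω → E} (hX : MemLp X 2 μ)
    (c : E) (lam : ℝ) : Integrable (fun ω => max (‖X ω - c‖ ^ 2) lam) μ :=
  ((hX.sub (memLp_const c)).integrable_norm_pow two_ne_zero).sup (integrable_const lam)

theorem Integrable.ite_lt_sq_norm {Y : Ω → E} (hY : Integrable Y μ) (lam : ℝ) :
    Integrable (fun ω => if lam < ‖Y ω‖ ^ 2 then Y ω else 0) μ := by
  have hs : NullMeasurableSet {ω | lam < ‖Y ω‖ ^ 2} μ :=
    nullMeasurableSet_lt aemeasurable_const (hY.aestronglyMeasurable.norm.pow 2).aemeasurable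
  refine (hY.indicator₀ hs).congr (ae_of_all _ fun ω => ?_)
  simp only [Set.indicator_apply, Set.mem_ofPred_eq]

end MeasureTheory

theorem stmt4_general {Ω : Type*} [MeasureSpace Ω] [IsProbabilityMeasure (ℙ : Measure Ω)]
    {d : ℕ} (X : Ω → EuclideanSpace ℝ (Fin d)) (hX : MemLp X 2 ℙ)
    (lam : ℝ) (θ : EuclideanSpace ℝ (Fin d)) :
    ∀ θ' : EuclideanSpace ℝ (Fin d),
      (∫ ω : Ω, max (‖X ω - θ‖ ^ 2) lam ∂(ℙ : Measure Ω)) +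
        inner ℝ ((-2 : ℝ) •
            ∫ ω : Ω, (if lam < ‖X ω - θ‖ ^ 2 then X ω - θ else 0) ∂(ℙ : Measure Ω))
          (θ' - θ)
      ≤ ∫ ω : Ω, max (‖X ω - θ'‖ ^ 2) lam ∂(ℙ : Measure Ω) := by
  intro θ'
  have hg := (((hX.sub (memLp_const θ)).integrable one_le_two).ite_lt_sq_norm lam).smul (-2 : ℝ)
  rw [← integral_smul]
  exact integral_add_inner_integral_le (hX.integrable_max_sq_norm_sub θ lam)
    (hX.integrable_max_sq_norm_sub θ' lam) hg (θ' - θ)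
    (ae_of_all _ fun ω => max_sq_norm_sub_add_inner_le (X ω) θ θ' lam)

/-- `g_λ(θ) = −2·E[(X−θ)·1(‖X−θ‖² > λ)]` is a subgradient at `θ` of
`G_λ(θ) = E[max{‖X−θ‖², λ}]`. -/
theorem stmt4 {Ω : Type*} [MeasureSpace Ω] [IsProbabilityMeasure (ℙ : Measure Ω)]
    {d : ℕ} (X : Ω → EuclideanSpace ℝ (Fin d)) (hX : MemLp X 2 ℙ)
    (lam : ℝ) (hlam : 0 ≤ lam) (θ : EuclideanSpace ℝ (Fin d)) :
    ∀ θ' : EuclideanSpace ℝ (Fin d),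
      (∫ ω : Ω, max (‖X ω - θ‖ ^ 2) lam ∂(ℙ : Measure Ω)) +
        inner ℝ ((-2 : ℝ) •
            ∫ ω : Ω, (if lam < ‖X ω - θ‖ ^ 2 then X ω - θ else 0) ∂(ℙ : Measure Ω))
          (θ' - θ)
      ≤ ∫ ω : Ω, max (‖X ω - θ'‖ ^ 2) lam ∂(ℙ : Measure Ω) :=
  stmt4_general X hX lam θ
end

section
/- Let X be a square-integrable ℝ^d-valued random vector and λ ≥ 0. Define the CCP iteration T(θ) = E[X·1(‖X−θ‖² ≤ λ)] + θ·P(‖X−θ‖² > λ) and the objective F(θ) = E[min{‖X−θ‖², λ}]. Then F(T(θ)) ≤ F(θ) for every θ ∈ ℝ^d, i.e., the convex–concave procedure iteration is a descent step. -/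
/-!
Majorize–minimize. Pointwise, splitting according to whether `‖a - θ‖² ≤ λ`,
`min(‖a - θ'‖², λ) ≤ min(‖a - θ‖², λ) + ‖θ' - θ‖² - 2⟪θ' - θ, 1(‖a - θ‖² ≤ λ)(a - θ)⟫`,
with equality at `θ' = θ`. In expectation `E[1(‖X - θ‖² ≤ λ)(X - θ)] = T θ - θ`, so the
majorant is `F θ + ‖θ' - T θ‖² - ‖T θ - θ‖²`, which is minimized at `θ' = T θ`; hence
`F (T θ) + ‖T θ - θ‖² ≤ F θ`.
-/

open MeasureTheory ProbabilityTheory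
open scoped RealInnerProductSpace

section Integrability

variable {E : Type*} [NormedAddCommGroup E] {Ω : Type*} [MeasurableSpace Ω] {μ : Measure Ω} {X : Ω → E}

lemma nullMeasurableSet_norm_sub_sq_le (hX : AEStronglyMeasurable X μ) (lam : ℝ) (θ : E) :
    NullMeasurableSet {ω | ‖X ω - θ‖ ^ 2 ≤ lam} μ :=
  ((hX.sub aestronglyMeasurable_const).norm.pow 2).nullMeasurableSet_le aestronglyMeasurable_const

variable [IsFiniteMeasure μ]

lemma integrable_min_norm_sub_sq (hX : AEStronglyMeasurable X μ) (lam : ℝ) (θ : E) :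
    Integrable (fun ω ↦ min (‖X ω - θ‖ ^ 2) lam) μ := by
  refine .of_bound (((hX.sub aestronglyMeasurable_const).norm.pow 2).inf
    aestronglyMeasurable_const) |lam| (.of_forall fun ω ↦ ?_)
  have hsq : 0 ≤ ‖X ω - θ‖ ^ 2 := by positivity
  rw [Real.norm_eq_abs]
  rcases le_total (‖X ω - θ‖ ^ 2) lam with h | h
  · rw [min_eq_left h]; exact abs_le_abs h (by linarith)
  · rw [min_eq_right h]

lemma integrable_ite_norm_sub_sq_le (hX : AEStronglyMeasurable X μ) (lam : ℝ) (θ : E) :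
    Integrable (fun ω ↦ if ‖X ω - θ‖ ^ 2 ≤ lam then X ω - θ else 0) μ := by
  have hmeas : AEStronglyMeasurable (fun ω ↦ if ‖X ω - θ‖ ^ 2 ≤ lam then X ω - θ else 0) μ :=
    ((hX.sub (aestronglyMeasurable_const (b := θ))).indicator₀
      (nullMeasurableSet_norm_sub_sq_le hX lam θ)).congr
      (.of_forall fun ω ↦ by simp [Set.indicator_apply])
  refine .of_bound hmeas (Real.sqrt lam) (.of_forall fun ω ↦ ?_)
  split_ifs with h
  · exact Real.le_sqrt_of_sq_le h
  · simp [Real.sqrt_nonneg]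

end Integrability

section Descent

variable {E : Type*} [NormedAddCommGroup E] [InnerProductSpace ℝ E]

lemma min_norm_sub_sq_le (a θ θ' : E) (lam : ℝ) :
    min (‖a - θ'‖ ^ 2) lam ≤ min (‖a - θ‖ ^ 2) lam + ‖θ' - θ‖ ^ 2
      - 2 * ⟪θ' - θ, if ‖a - θ‖ ^ 2 ≤ lam then a - θ else 0⟫ := by
  split_ifs with h
  · have hexpand : ‖a - θ'‖ ^ 2 = ‖a - θ‖ ^ 2 - 2 * ⟪a - θ, θ' - θ⟫ + ‖θ' - θ‖ ^ 2 := by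
      rw [← norm_sub_sq_real]; congr 2; abel
    rw [min_eq_left h, real_inner_comm]
    linarith [min_le_left (‖a - θ'‖ ^ 2) lam]
  · rw [min_eq_right (not_le.mp h).le, inner_zero_right]
    nlinarith [min_le_right (‖a - θ'‖ ^ 2) lam, sq_nonneg ‖θ' - θ‖]

variable [CompleteSpace E] {Ω : Type*} [MeasurableSpace Ω]

noncomputable def truncatedRisk (μ : Measure Ω) (X : Ω → E) (lam : ℝ) (θ : E) : ℝ :=
  ∫ ω, min (‖X ω - θ‖ ^ 2) lam ∂μ

noncomputable def ccpStep (μ : Measure Ω) (X : Ω → E) (lam : ℝ) (θ : E) : E :=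
  (∫ ω, (if ‖X ω - θ‖ ^ 2 ≤ lam then X ω else 0) ∂μ) + (μ {ω | lam < ‖X ω - θ‖ ^ 2}).toReal • θ

variable {μ : Measure Ω} [IsProbabilityMeasure μ] {X : Ω → E}

lemma integral_ite_norm_sub_sq_le (hX : AEStronglyMeasurable X μ) (lam : ℝ) (θ : E) :
    ∫ ω, (if ‖X ω - θ‖ ^ 2 ≤ lam then X ω - θ else 0) ∂μ = ccpStep μ X lam θ - θ := by
  set S := {ω | ‖X ω - θ‖ ^ 2 ≤ lam}
  have hS : NullMeasurableSet S μ := nullMeasurableSet_norm_sub_sq_le hX lam θ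
  have hsplit : (fun ω ↦ if ‖X ω - θ‖ ^ 2 ≤ lam then X ω else 0) =
      fun ω ↦ (if ‖X ω - θ‖ ^ 2 ≤ lam then X ω - θ else 0) + S.indicator (fun _ ↦ θ) ω := by
    funext ω
    split_ifs with h <;> simp [S, h]
  have hcompl : (μ {ω | lam < ‖X ω - θ‖ ^ 2}).toReal = 1 - μ.real S := by
    rw [← probReal_compl_eq_one_sub₀ hS]
    congr 2
    ext ω
    simp [S]
  rw [ccpStep, hsplit, integral_add (integrable_ite_norm_sub_sq_le hX lam θ)
    ((integrable_const θ).indicator₀ hS), integral_indicator₀ hS, setIntegral_const, hcompl]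
  module

lemma truncatedRisk_le_majorant (hX : AEStronglyMeasurable X μ) (lam : ℝ) (θ θ' : E) :
    truncatedRisk μ X lam θ' ≤ truncatedRisk μ X lam θ + ‖θ' - ccpStep μ X lam θ‖ ^ 2
      - ‖ccpStep μ X lam θ - θ‖ ^ 2 := by
  set g := fun ω ↦ if ‖X ω - θ‖ ^ 2 ≤ lam then X ω - θ else 0
  have hg : Integrable g μ := integrable_ite_norm_sub_sq_le hX lam θ
  have hmin := integrable_min_norm_sub_sq hX lam θ
  have hmaj : Integrable (fun ω ↦ min (‖X ω - θ‖ ^ 2) lam + ‖θ' - θ‖ ^ 2) μ :=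
    hmin.add (integrable_const _)
  have hlin : Integrable (fun ω ↦ 2 * ⟪θ' - θ, g ω⟫) μ := (hg.const_inner _).const_mul 2
  calc truncatedRisk μ X lam θ'
      ≤ ∫ ω, (min (‖X ω - θ‖ ^ 2) lam + ‖θ' - θ‖ ^ 2 - 2 * ⟪θ' - θ, g ω⟫) ∂μ :=
        integral_mono (integrable_min_norm_sub_sq hX lam θ')
          (hmaj.sub hlin)
          fun ω ↦ min_norm_sub_sq_le (X ω) θ θ' lam
    _ = truncatedRisk μ X lam θ + ‖θ' - θ‖ ^ 2 - 2 * ⟪θ' - θ, ccpStep μ X lam θ - θ⟫ := by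
        rw [integral_sub hmaj hlin,
          integral_add hmin (integrable_const _), integral_const, integral_const_mul,
          integral_inner hg, integral_ite_norm_sub_sq_le hX lam θ]
        simp [truncatedRisk]
    _ = truncatedRisk μ X lam θ + ‖θ' - ccpStep μ X lam θ‖ ^ 2
          - ‖ccpStep μ X lam θ - θ‖ ^ 2 := by
        rw [show θ' - ccpStep μ X lam θ = (θ' - θ) - (ccpStep μ X lam θ - θ) by abel,
          norm_sub_sq_real (θ' - θ), real_inner_comm]
        ring

theorem truncatedRisk_ccpStep_add_le (hX : AEStronglyMeasurable X μ) (lam : ℝ) (θ : E) :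
    truncatedRisk μ X lam (ccpStep μ X lam θ) + ‖ccpStep μ X lam θ - θ‖ ^ 2 ≤
      truncatedRisk μ X lam θ := by
  have := truncatedRisk_le_majorant hX lam θ (ccpStep μ X lam θ)
  rw [sub_self, norm_zero] at this
  linarith [zero_pow (M₀ := ℝ) two_ne_zero]

end Descent

theorem stmt17_general {Ω : Type*} [MeasureSpace Ω] [IsProbabilityMeasure (ℙ : Measure Ω)]
    {d : ℕ} (X : Ω → EuclideanSpace ℝ (Fin d)) (hX : MemLp X 2 ℙ)
    (lam : ℝ) :
    let T : EuclideanSpace ℝ (Fin d) → EuclideanSpace ℝ (Fin d) := fun θ =>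
      (∫ ω : Ω, (if ‖X ω - θ‖ ^ 2 ≤ lam then X ω else 0) ∂(ℙ : Measure Ω)) +
        (ℙ {ω | lam < ‖X ω - θ‖ ^ 2}).toReal • θ
    let F : EuclideanSpace ℝ (Fin d) → ℝ := fun θ =>
      ∫ ω : Ω, min (‖X ω - θ‖ ^ 2) lam ∂(ℙ : Measure Ω)
    ∀ θ : EuclideanSpace ℝ (Fin d), F (T θ) ≤ F θ := by
  intro T F θ
  show truncatedRisk ℙ X lam (ccpStep ℙ X lam θ) ≤ truncatedRisk ℙ X lam θ
  linarith [truncatedRisk_ccpStep_add_le hX.aestronglyMeasurable lam θ,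
    sq_nonneg ‖ccpStep ℙ X lam θ - θ‖]

/-- the CCP iteration `T(θ) = E[X·1(‖X−θ‖² ≤ λ)] + θ·P(‖X−θ‖² > λ)` is a
descent step for `F(θ) = E[min{‖X−θ‖², λ}]`: `F(T θ) ≤ F θ` for all `θ`. -/
theorem stmt17 {Ω : Type*} [MeasureSpace Ω] [IsProbabilityMeasure (ℙ : Measure Ω)]
    {d : ℕ} (X : Ω → EuclideanSpace ℝ (Fin d)) (hX : MemLp X 2 ℙ)
    (lam : ℝ) (hlam : 0 ≤ lam) :
    let T : EuclideanSpace ℝ (Fin d) → EuclideanSpace ℝ (Fin d) := fun θ =>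
      (∫ ω : Ω, (if ‖X ω - θ‖ ^ 2 ≤ lam then X ω else 0) ∂(ℙ : Measure Ω)) +
        (ℙ {ω | lam < ‖X ω - θ‖ ^ 2}).toReal • θ
    let F : EuclideanSpace ℝ (Fin d) → ℝ := fun θ =>
      ∫ ω : Ω, min (‖X ω - θ‖ ^ 2) lam ∂(ℙ : Measure Ω)
    ∀ θ : EuclideanSpace ℝ (Fin d), F (T θ) ≤ F θ :=
  stmt17_general X hX lam
end
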